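/- arXiv:1804.05437 — 6 statements merged into one kernel-verified Lean document; each statement's English description precedes it below -/
import Mathlib

section
/- Let q ≠ 0 and r be real numbers. For every nonnegative integer n, ∑_{j=0}^n (−1)^n w(n,j) B_j^q(r) = n!/(n+1). -/
/-- The falling factorial `(x)_k = x(x-1)⋯(x-k+1)`. -/
noncomputable def fallFac (x : ℝ) (k : ℕ) : ℝ := ∏ i ∈ Finset.range k, (x - i)

lemma fallFac_cast_eq_zero {k i : ℕ} (h : k < i) : fallFac (k : ℝ) i = 0 := by
  apply Finset.prod_eq_zero (Finset.mem_range.2 h)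
  simp

lemma fallFac_cast_self (k : ℕ) : fallFac (k : ℝ) k = k.factorial := by
  induction k with
  | zero => simp [fallFac]
  | succ k ih =>
    rw [fallFac, Finset.prod_range_succ']
    have h : ∀ i ∈ Finset.range k, (((k + 1 : ℕ) : ℝ) - ((i + 1 : ℕ) : ℕ)) = (k : ℝ) - i := by
      intro i _; push_cast; ring
    rw [Finset.prod_congr rfl h]
    rw [show (∏ i ∈ Finset.range k, ((k : ℝ) - i)) = fallFac k k from rfl, ih]
    push_cast [Nat.factorial_succ]
    ring

lemma fallFac_indep (m : ℕ) (d : ℕ → ℝ)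
    (h : ∀ x : ℝ, ∑ k ∈ Finset.range m, d k * fallFac x k = 0) :
    ∀ k < m, d k = 0 := by
  intro k
  induction k using Nat.strong_induction_on with
  | _ k ih =>
    intro hk
    have h0 := h (k : ℝ)
    rw [Finset.sum_eq_single k] at h0
    · rw [fallFac_cast_self] at h0
      have hf : (k.factorial : ℝ) ≠ 0 := by positivity
      exact (mul_eq_zero.1 h0).resolve_right hf
    · intro i hi hne
      rcases lt_or_gt_of_ne hne with h1 | h1
      · rw [ih i h1 (lt_trans h1 hk), zero_mul]
      · rw [fallFac_cast_eq_zero h1, mul_zero]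
    · intro hk'; exact absurd (Finset.mem_range.2 hk) hk'

/-- `∑_{j=0}^n (−1)^n w(n,j) B_j^q(r) = n!/(n+1)`, where `w` are the
`r`-Whitney numbers of the first kind and `B` the Bernoulli polynomials with a
`q` parameter, defined via the `r`-Whitney numbers of the second kind `W`. -/
theorem whitneyFirst_mul_bernoulli_q_sum (q r : ℝ) (hq : q ≠ 0)
    (W : ℕ → ℕ → ℝ)
    (hW0 : ∀ n k, n < k → W n k = 0)
    (hW : ∀ n : ℕ, ∀ x : ℝ, (q * x + r) ^ n =
      ∑ k ∈ Finset.range (n + 1), q ^ k * W n k * fallFac x k)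
    (w : ℕ → ℕ → ℝ)
    (hw0 : ∀ n k, n < k → w n k = 0)
    (hw : ∀ n : ℕ, ∀ x : ℝ, q ^ n * fallFac x n =
      ∑ k ∈ Finset.range (n + 1), w n k * (q * x + r) ^ k)
    (B : ℕ → ℝ)
    (hB : ∀ n, B n = ∑ k ∈ Finset.range (n + 1),
      (-1 : ℝ) ^ k * ((k.factorial : ℝ) / ((k : ℝ) + 1)) * W n k)
    (n : ℕ) :
    ∑ j ∈ Finset.range (n + 1), (-1 : ℝ) ^ n * w n j * B j =
      (n.factorial : ℝ) / ((n : ℝ) + 1) := by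
  set S : ℕ → ℝ := fun k => ∑ j ∈ Finset.range (n + 1), w n j * W j k with hSdef
  -- expansion of (qx+r)^j over the full range, for j ≤ n
  have hWfull : ∀ j ∈ Finset.range (n + 1), ∀ x : ℝ, (q * x + r) ^ j =
      ∑ k ∈ Finset.range (n + 1), q ^ k * W j k * fallFac x k := by
    intro j hj x
    rw [hW j x]
    apply Finset.sum_subset
    · intro k hk
      simp only [Finset.mem_range] at *
      omega
    · intro k _ hk'
      simp only [Finset.mem_range, not_lt] at hk'
      rw [hW0 j k (by omega), mul_zero, zero_mul]
  -- the zero linear combination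
  have hzero : ∀ x : ℝ, ∑ k ∈ Finset.range (n + 1),
      (q ^ k * S k - (if k = n then q ^ n else 0)) * fallFac x k = 0 := by
    intro x
    have h1 : q ^ n * fallFac x n = ∑ j ∈ Finset.range (n + 1),
        ∑ k ∈ Finset.range (n + 1), w n j * (q ^ k * W j k * fallFac x k) := by
      rw [hw n x]
      refine Finset.sum_congr rfl fun j hj => ?_
      rw [hWfull j hj x, Finset.mul_sum]
    rw [Finset.sum_comm] at h1
    have h2 : ∀ k ∈ Finset.range (n + 1),
        ∑ j ∈ Finset.range (n + 1), w n j * (q ^ k * W j k * fallFac x k) =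
        q ^ k * S k * fallFac x k := by
      intro k _
      rw [hSdef]
      simp only [Finset.sum_mul, Finset.mul_sum]
      exact Finset.sum_congr rfl fun j _ => by ring
    rw [Finset.sum_congr rfl h2] at h1
    have h3 : ∑ k ∈ Finset.range (n + 1),
        (if k = n then q ^ n else 0) * fallFac x k = q ^ n * fallFac x n := by
      rw [Finset.sum_congr rfl (fun k _ => by
        rw [ite_mul, zero_mul] :
          ∀ k ∈ Finset.range (n + 1), (if k = n then q ^ n else 0) * fallFac x k =
            if k = n then q ^ n * fallFac x k else 0)]
      rw [Finset.sum_ite_eq' (Finset.range (n + 1)) n (fun k => q ^ n * fallFac x k)]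
      simp
    simp only [sub_mul, Finset.sum_sub_distrib, h3, ← h1, sub_self]
  have key := fallFac_indep (n + 1) _ hzero
  have hS : ∀ k < n + 1, S k = if k = n then 1 else 0 := by
    intro k hk
    have := sub_eq_zero.1 (key k hk)
    by_cases h : k = n
    · subst h
      simp only [if_pos rfl] at this ⊢
      exact mul_left_cancel₀ (pow_ne_zero _ hq) (this.trans (mul_one _).symm)
    · simp only [if_neg h] at this ⊢
      exact (mul_eq_zero.1 this).resolve_left (pow_ne_zero _ hq)
  -- final computation
  have hBfull : ∀ j ∈ Finset.range (n + 1), B j = ∑ k ∈ Finset.range (n + 1),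
      (-1 : ℝ) ^ k * ((k.factorial : ℝ) / ((k : ℝ) + 1)) * W j k := by
    intro j hj
    rw [hB j]
    apply Finset.sum_subset
    · intro k hk
      simp only [Finset.mem_range] at *
      omega
    · intro k _ hk'
      simp only [Finset.mem_range, not_lt] at hk'
      rw [hW0 j k (by omega), mul_zero]
  calc ∑ j ∈ Finset.range (n + 1), (-1 : ℝ) ^ n * w n j * B j
      = ∑ j ∈ Finset.range (n + 1), ∑ k ∈ Finset.range (n + 1),
          (-1 : ℝ) ^ n * ((-1 : ℝ) ^ k * ((k.factorial : ℝ) / ((k : ℝ) + 1))) *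
            (w n j * W j k) := by
        refine Finset.sum_congr rfl fun j hj => ?_
        rw [hBfull j hj, Finset.mul_sum]
        exact Finset.sum_congr rfl fun k _ => by ring
    _ = ∑ k ∈ Finset.range (n + 1),
          (-1 : ℝ) ^ n * ((-1 : ℝ) ^ k * ((k.factorial : ℝ) / ((k : ℝ) + 1))) * S k := by
        rw [Finset.sum_comm]
        exact Finset.sum_congr rfl fun k _ => by rw [hSdef, Finset.mul_sum]
    _ = (n.factorial : ℝ) / ((n : ℝ) + 1) := by
        rw [Finset.sum_congr rfl (fun k hk => by
          rw [hS k (Finset.mem_range.1 hk), mul_ite, mul_one, mul_zero])]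
        rw [Finset.sum_ite_eq' (Finset.range (n + 1)) n]
        simp [← mul_assoc, ← mul_pow]
end

section
/- Let q ≠ 0 and r be real numbers. For every nonnegative integer n, B_n^q(r) = ∑_{k=0}^n (1/(q^k (k+1))) ∑_{j=0}^k (−1)^j C(k,j) (r + jq)^n, where C(k,j) denotes the binomial coefficient. -/
/-!
The alternating sum `∑_j (-1)^j C(k,j) f(j)` is `(-1)^k Δ^k f(0)`, and `Δ^k` applied to
`(x)_i = i! C(x,i)` at `0` is `k!` if `i = k` and `0` otherwise. Expanding `(r + jq)^n` in falling
factorials by the defining identity of `W` therefore turns the inner sum into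
`(-1)^k k! q^k W(n,k)`, and the factor `1/(q^k (k+1))` leaves the `k`-th term of `B_n^q(r)`.
-/

open Finset

lemma fallFac_natCast (j k : ℕ) : fallFac j k = k.factorial * j.choose k := by
  rw [fallFac, ← descPochhammer_eval_eq_prod_range, descPochhammer_eval_eq_descFactorial,
    Nat.descFactorial_eq_factorial_mul_choose, Nat.cast_mul]

lemma neg_one_pow_eq_neg_one_pow_mul_neg_one_pow_sub {R : Type*} [Monoid R] [HasDistribNeg R]
    {j k : ℕ} (h : j ≤ k) : (-1 : R) ^ j = (-1) ^ k * (-1) ^ (k - j) := by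
  obtain ⟨d, rfl⟩ := Nat.exists_eq_add_of_le h
  rw [Nat.add_sub_cancel_left, ← pow_add, add_assoc, pow_add, ← two_mul, pow_mul]
  simp

lemma sum_range_neg_one_pow_mul_choose_mul_choose {R : Type*} [CommRing R] (k i : ℕ) :
    ∑ j ∈ range (k + 1), (-1 : R) ^ j * k.choose j * j.choose i =
      if k = i then (-1) ^ k else 0 := by
  have hΔ := congrArg (Int.cast : ℤ → R) (fwdDiff_iter_choose_zero i k)
  simp only [fwdDiff_iter_eq_sum_shift, smul_eq_mul, zero_add, mul_one, Int.cast_sum,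
    Int.cast_mul, Int.cast_pow, Int.cast_neg, Int.cast_one, Int.cast_natCast] at hΔ
  calc ∑ j ∈ range (k + 1), (-1 : R) ^ j * k.choose j * j.choose i
      = (-1) ^ k * ∑ j ∈ range (k + 1), (-1 : R) ^ (k - j) * k.choose j * j.choose i := by
        rw [mul_sum]
        refine sum_congr rfl fun j hj => ?_
        rw [neg_one_pow_eq_neg_one_pow_mul_neg_one_pow_sub (Nat.le_of_lt_succ (mem_range.1 hj))]
        ring
    _ = if k = i then (-1) ^ k else 0 := by
        rw [hΔ]
        split_ifs <;> simp

lemma sum_range_neg_one_pow_mul_choose_mul_sum_fallFac (c : ℕ → ℝ) {k m : ℕ} (hk : k ≤ m) :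
    ∑ j ∈ range (k + 1), (-1 : ℝ) ^ j * k.choose j * ∑ i ∈ range (m + 1), c i * fallFac j i =
      (-1) ^ k * k.factorial * c k := by
  calc ∑ j ∈ range (k + 1), (-1 : ℝ) ^ j * k.choose j * ∑ i ∈ range (m + 1), c i * fallFac j i
      = ∑ i ∈ range (m + 1), c i * i.factorial *
          ∑ j ∈ range (k + 1), (-1 : ℝ) ^ j * k.choose j * j.choose i := by
        simp_rw [fallFac_natCast, mul_sum]
        rw [sum_comm]
        refine sum_congr rfl fun i _ => sum_congr rfl fun j _ => ?_
        ring
    _ = (-1) ^ k * k.factorial * c k := by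
        simp_rw [sum_range_neg_one_pow_mul_choose_mul_choose, mul_ite, mul_zero, sum_ite_eq,
          mem_range, Nat.lt_succ_of_le hk, if_true]
        ring

theorem bernoulli_q_explicit_general (q r : ℝ) (hq : q ≠ 0)
    (W : ℕ → ℕ → ℝ)
    (hW : ∀ n : ℕ, ∀ x : ℝ, (q * x + r) ^ n =
      ∑ k ∈ Finset.range (n + 1), q ^ k * W n k * fallFac x k)
    (B : ℕ → ℝ)
    (hB : ∀ n, B n = ∑ k ∈ Finset.range (n + 1),
      (-1 : ℝ) ^ k * ((k.factorial : ℝ) / ((k : ℝ) + 1)) * W n k)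
    (n : ℕ) :
    B n = ∑ k ∈ Finset.range (n + 1), (1 / (q ^ k * ((k : ℝ) + 1))) *
      ∑ j ∈ Finset.range (k + 1),
        (-1 : ℝ) ^ j * (k.choose j : ℝ) * (r + (j : ℝ) * q) ^ n := by
  rw [hB n]
  refine sum_congr rfl fun k hk => ?_
  have hpow (j : ℕ) :
      (r + (j : ℝ) * q) ^ n = ∑ i ∈ range (n + 1), q ^ i * W n i * fallFac j i := by
    rw [← hW, add_comm, mul_comm]
  simp_rw [hpow]
  rw [sum_range_neg_one_pow_mul_choose_mul_sum_fallFac (fun i => q ^ i * W n i)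
    (Nat.le_of_lt_succ (mem_range.1 hk))]
  field_simp

/-- the explicit formula
`B_n^q(r) = ∑_{k=0}^n (1/(q^k (k+1))) ∑_{j=0}^k (−1)^j C(k,j) (r + jq)^n`. -/
theorem bernoulli_q_explicit (q r : ℝ) (hq : q ≠ 0)
    (W : ℕ → ℕ → ℝ)
    (hW0 : ∀ n k, n < k → W n k = 0)
    (hW : ∀ n : ℕ, ∀ x : ℝ, (q * x + r) ^ n =
      ∑ k ∈ Finset.range (n + 1), q ^ k * W n k * fallFac x k)
    (B : ℕ → ℝ)
    (hB : ∀ n, B n = ∑ k ∈ Finset.range (n + 1),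
      (-1 : ℝ) ^ k * ((k.factorial : ℝ) / ((k : ℝ) + 1)) * W n k)
    (n : ℕ) :
    B n = ∑ k ∈ Finset.range (n + 1), (1 / (q ^ k * ((k : ℝ) + 1))) *
      ∑ j ∈ Finset.range (k + 1),
        (-1 : ℝ) ^ j * (k.choose j : ℝ) * (r + (j : ℝ) * q) ^ n :=
  bernoulli_q_explicit_general q r hq W hW B hB n
end

section
/- Let q ≠ 0 and r be real numbers. For every nonnegative integer n, c_n^q(r) = ∑_{k=0}^n ∑_{j=0}^k ((−1)^k / k!) w(n,k) w(k,j) B_j^q(r). -/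
/-- The generalized falling factorial `(x|q)_k = x(x-q)⋯(x-(k-1)q)`. -/
noncomputable def genFallFac (q x : ℝ) (k : ℕ) : ℝ := ∏ i ∈ Finset.range k, (x - i * q)

/-- The Cauchy polynomials with a `q` parameter of the first kind:
`c_n^q(z) = ∫_0^1 (x − z | q)_n dx`. -/
noncomputable def cauchyFirst (q z : ℝ) (n : ℕ) : ℝ := ∫ x in (0:ℝ)..1, genFallFac q (x - z) n

/-!
Substituting `x = (y - r)/q` in the defining identity of `w` gives `(y - r | q)_n = ∑ w(n,k) yᵏ`,
so `c_n^q(r) = ∑ w(n,k)/(k+1)`. On the other hand, the two defining identities say that the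
triangular matrices `w` and `W` are inverse to each other (falling factorials are linearly
independent, as one sees by evaluating at `0, 1, 2, …`), hence
`∑_j w(k,j) B_j^q(r) = (-1)ᵏ k!/(k+1)`, and the two expressions agree.
-/

open Finset

lemma fallFac_eq_eval_descPochhammer (x : ℝ) (k : ℕ) :
    fallFac x k = (descPochhammer ℝ k).eval x :=
  (descPochhammer_eval_eq_prod_range k x).symm

lemma fallFac_natCast_s3 (m k : ℕ) : fallFac m k = m.descFactorial k := by
  rw [fallFac_eq_eval_descPochhammer, descPochhammer_eval_eq_descFactorial]

lemma genFallFac_eq_pow_mul_fallFac {q : ℝ} (hq : q ≠ 0) (x : ℝ) (n : ℕ) :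
    genFallFac q x n = q ^ n * fallFac (x / q) n :=
  calc ∏ i ∈ range n, (x - i * q) = ∏ i ∈ range n, q * (x / q - i) :=
        prod_congr rfl fun i _ => by field_simp
    _ = q ^ n * fallFac (x / q) n := by rw [prod_mul_distrib, prod_const, card_range, fallFac]

lemma eq_of_forall_sum_mul_fallFac_eq {N : ℕ} {a b : ℕ → ℝ}
    (h : ∀ x, ∑ i ∈ range N, a i * fallFac x i = ∑ i ∈ range N, b i * fallFac x i) :
    ∀ i < N, a i = b i := by
  intro i
  induction i using Nat.strong_induction_on with
  | _ i ih =>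
    intro hi
    have hsum : ∑ j ∈ range N, (a j - b j) * fallFac i j = (a i - b i) * i.factorial := by
      rw [sum_eq_single_of_mem i (mem_range.2 hi), fallFac_natCast_s3, Nat.descFactorial_self]
      intro j _ hji
      rcases lt_or_gt_of_ne hji with hlt | hgt
      · rw [sub_eq_zero.2 (ih j hlt (hlt.trans hi)), zero_mul]
      · rw [fallFac_natCast_s3, Nat.descFactorial_eq_zero_iff_lt.2 hgt, Nat.cast_zero, mul_zero]
    have hzero : ∑ j ∈ range N, (a j - b j) * fallFac i j = 0 := by
      simp only [sub_mul, sum_sub_distrib, h, sub_self]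
    rw [hsum] at hzero
    exact sub_eq_zero.1 ((mul_eq_zero.1 hzero).resolve_right (Nat.cast_ne_zero.2 i.factorial_ne_zero))

lemma sum_range_succ_eq_of_le {M : Type*} [AddCommMonoid M] {f : ℕ → M} {k m : ℕ} (hkm : k ≤ m) (hf : ∀ i, k < i → f i = 0) :
    ∑ i ∈ range (k + 1), f i = ∑ i ∈ range (m + 1), f i :=
  sum_subset (range_subset_range.2 (by omega)) fun i _ hi => hf i (by simpa using hi)

section Whitney

variable {q r : ℝ} {W w : ℕ → ℕ → ℝ}

lemma sum_w_mul_W_eq_ite (hq : q ≠ 0)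
    (hW0 : ∀ n k, n < k → W n k = 0)
    (hW : ∀ n : ℕ, ∀ x : ℝ, (q * x + r) ^ n =
      ∑ k ∈ range (n + 1), q ^ k * W n k * fallFac x k)
    (hw : ∀ n : ℕ, ∀ x : ℝ, q ^ n * fallFac x n =
      ∑ k ∈ range (n + 1), w n k * (q * x + r) ^ k)
    {m i : ℕ} (hi : i ≤ m) :
    ∑ k ∈ range (m + 1), w m k * W k i = if i = m then 1 else 0 := by
  have hexp : ∀ x, ∑ i ∈ range (m + 1), (q ^ i * ∑ k ∈ range (m + 1), w m k * W k i) * fallFac x i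
      = ∑ i ∈ range (m + 1), (if i = m then q ^ m else 0) * fallFac x i := by
    intro x
    have hWm : ∀ k ∈ range (m + 1), (q * x + r) ^ k
        = ∑ i ∈ range (m + 1), q ^ i * W k i * fallFac x i := fun k hk =>
      (hW k x).trans (sum_range_succ_eq_of_le (Nat.lt_succ_iff.1 (mem_range.1 hk))
        fun i hki => by rw [hW0 k i hki, mul_zero, zero_mul])
    calc ∑ i ∈ range (m + 1), (q ^ i * ∑ k ∈ range (m + 1), w m k * W k i) * fallFac x i
        = ∑ k ∈ range (m + 1), w m k * ∑ i ∈ range (m + 1), q ^ i * W k i * fallFac x i := by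
          simp only [mul_sum, sum_mul]
          rw [sum_comm]
          exact sum_congr rfl fun _ _ => sum_congr rfl fun _ _ => by ring
      _ = q ^ m * fallFac x m := by rw [hw m x, sum_congr rfl fun k hk => by rw [← hWm k hk]]
      _ = ∑ i ∈ range (m + 1), (if i = m then q ^ m else 0) * fallFac x i := by simp
  have hcoeff := eq_of_forall_sum_mul_fallFac_eq hexp i (Nat.lt_succ_of_le hi)
  split_ifs at hcoeff ⊢ with him
  · subst him
    exact mul_left_cancel₀ (pow_ne_zero _ hq) (hcoeff.trans (mul_one _).symm)
  · exact (mul_eq_zero.1 hcoeff).resolve_left (pow_ne_zero _ hq)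

lemma sum_w_mul_sum_mul_W (hq : q ≠ 0)
    (hW0 : ∀ n k, n < k → W n k = 0)
    (hW : ∀ n : ℕ, ∀ x : ℝ, (q * x + r) ^ n =
      ∑ k ∈ range (n + 1), q ^ k * W n k * fallFac x k)
    (hw : ∀ n : ℕ, ∀ x : ℝ, q ^ n * fallFac x n =
      ∑ k ∈ range (n + 1), w n k * (q * x + r) ^ k)
    (c : ℕ → ℝ) (k : ℕ) :
    ∑ j ∈ range (k + 1), w k j * ∑ i ∈ range (j + 1), c i * W j i = c k := by
  calc ∑ j ∈ range (k + 1), w k j * ∑ i ∈ range (j + 1), c i * W j i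
      = ∑ i ∈ range (k + 1), c i * ∑ j ∈ range (k + 1), w k j * W j i := by
        rw [sum_congr rfl fun j hj => congrArg (w k j * ·)
          (sum_range_succ_eq_of_le (Nat.lt_succ_iff.1 (mem_range.1 hj))
            fun i hji => by rw [hW0 j i hji, mul_zero])]
        simp only [mul_sum]
        rw [sum_comm]
        exact sum_congr rfl fun _ _ => sum_congr rfl fun _ _ => by ring
    _ = ∑ i ∈ range (k + 1), c i * if i = k then 1 else 0 :=
        sum_congr rfl fun i hi => by
          rw [sum_w_mul_W_eq_ite hq hW0 hW hw (Nat.lt_succ_iff.1 (mem_range.1 hi))]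
    _ = c k := by simp

lemma cauchyFirst_eq_sum_w_div (hq : q ≠ 0)
    (hw : ∀ n : ℕ, ∀ x : ℝ, q ^ n * fallFac x n =
      ∑ k ∈ range (n + 1), w n k * (q * x + r) ^ k) (n : ℕ) :
    cauchyFirst q r n = ∑ k ∈ range (n + 1), w n k / ((k : ℝ) + 1) := by
  have hpoly : ∀ x, genFallFac q (x - r) n = ∑ k ∈ range (n + 1), w n k * x ^ k := fun x => by
    rw [genFallFac_eq_pow_mul_fallFac hq, hw]
    congr! 3
    field_simp
    ring
  rw [cauchyFirst, intervalIntegral.integral_congr fun x _ => hpoly x,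
    intervalIntegral.integral_finsetSum fun k _ => (by fun_prop : Continuous _).intervalIntegrable _ _]
  refine sum_congr rfl fun k _ => ?_
  rw [intervalIntegral.integral_const_mul, integral_pow]
  simp [div_eq_mul_inv]

end Whitney

theorem cauchyFirst_eq_double_sum_bernoulli_q_general (q r : ℝ) (hq : q ≠ 0)
    (W : ℕ → ℕ → ℝ)
    (hW0 : ∀ n k, n < k → W n k = 0)
    (hW : ∀ n : ℕ, ∀ x : ℝ, (q * x + r) ^ n =
      ∑ k ∈ Finset.range (n + 1), q ^ k * W n k * fallFac x k)
    (w : ℕ → ℕ → ℝ)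
    (hw : ∀ n : ℕ, ∀ x : ℝ, q ^ n * fallFac x n =
      ∑ k ∈ Finset.range (n + 1), w n k * (q * x + r) ^ k)
    (B : ℕ → ℝ)
    (hB : ∀ n, B n = ∑ k ∈ Finset.range (n + 1),
      (-1 : ℝ) ^ k * ((k.factorial : ℝ) / ((k : ℝ) + 1)) * W n k)
    (n : ℕ) :
    cauchyFirst q r n = ∑ k ∈ Finset.range (n + 1), ∑ j ∈ Finset.range (k + 1),
      ((-1 : ℝ) ^ k / (k.factorial : ℝ)) * w n k * w k j * B j := by
  rw [cauchyFirst_eq_sum_w_div hq hw n]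
  refine sum_congr rfl fun k _ => ?_
  have hwB : ∑ j ∈ range (k + 1), w k j * B j = (-1 : ℝ) ^ k * (k.factorial / ((k : ℝ) + 1)) := by
    simp only [hB]
    exact sum_w_mul_sum_mul_W hq hW0 hW hw _ k
  have hsign : ((-1 : ℝ) ^ k) ^ 2 = 1 := by rw [← pow_mul, mul_comm, pow_mul, neg_one_sq, one_pow]
  have hfac : (k.factorial : ℝ) ≠ 0 := Nat.cast_ne_zero.2 k.factorial_ne_zero
  simp only [mul_assoc, ← mul_sum, hwB]
  field_simp
  rw [hsign, mul_one]

/-- `c_n^q(r) = ∑_{k=0}^n ∑_{j=0}^k ((−1)^k/k!) w(n,k) w(k,j) B_j^q(r)`. -/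
theorem cauchyFirst_eq_double_sum_bernoulli_q (q r : ℝ) (hq : q ≠ 0)
    (W : ℕ → ℕ → ℝ)
    (hW0 : ∀ n k, n < k → W n k = 0)
    (hW : ∀ n : ℕ, ∀ x : ℝ, (q * x + r) ^ n =
      ∑ k ∈ Finset.range (n + 1), q ^ k * W n k * fallFac x k)
    (w : ℕ → ℕ → ℝ)
    (hw0 : ∀ n k, n < k → w n k = 0)
    (hw : ∀ n : ℕ, ∀ x : ℝ, q ^ n * fallFac x n =
      ∑ k ∈ Finset.range (n + 1), w n k * (q * x + r) ^ k)
    (B : ℕ → ℝ)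
    (hB : ∀ n, B n = ∑ k ∈ Finset.range (n + 1),
      (-1 : ℝ) ^ k * ((k.factorial : ℝ) / ((k : ℝ) + 1)) * W n k)
    (n : ℕ) :
    cauchyFirst q r n = ∑ k ∈ Finset.range (n + 1), ∑ j ∈ Finset.range (k + 1),
      ((-1 : ℝ) ^ k / (k.factorial : ℝ)) * w n k * w k j * B j :=
  cauchyFirst_eq_double_sum_bernoulli_q_general q r hq W hW0 hW w hw B hB n
end

section
/- Let q ≠ 0 and let r and s be real numbers. For every nonnegative integer n, B_n^q(r+s) = ∑_{j=0}^n C(n,j) r^{n−j} B_j^q(s), where C(n,j) denotes the binomial coefficient. -/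
lemma fallFac_self (m : ℕ) : fallFac (m : ℝ) m = m.factorial := by
  unfold fallFac
  rw [← Finset.prod_range_reflect]
  have : ∀ j ∈ Finset.range m, ((m : ℝ) - (m - 1 - j : ℕ)) = (j + 1 : ℕ) := by
    intro j hj
    have hj' := Finset.mem_range.mp hj
    have h2 : m - 1 - j + (j + 1) = m := by omega
    have h3 : ((m - 1 - j : ℕ) : ℝ) + ((j + 1 : ℕ) : ℝ) = (m : ℝ) := by
      rw [← Nat.cast_add, h2]
    linarith
  rw [Finset.prod_congr rfl this]
  rw [← Nat.cast_prod]
  norm_cast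
  exact Finset.prod_range_add_one_eq_factorial m

lemma fallFac_zero_of_lt (m k : ℕ) (h : m < k) : fallFac (m : ℝ) k = 0 := by
  unfold fallFac
  apply Finset.prod_eq_zero (Finset.mem_range.mpr h)
  simp

lemma coeff_unique (N : ℕ) (c d : ℕ → ℝ)
    (h : ∀ x : ℝ, ∑ k ∈ Finset.range N, c k * fallFac x k
        = ∑ k ∈ Finset.range N, d k * fallFac x k) :
    ∀ k, k < N → c k = d k := by
  intro m
  induction m using Nat.strong_induction_on with
  | _ m ih =>
    intro hm
    have h0 : ∑ k ∈ Finset.range N, (c k - d k) * fallFac (m : ℝ) k = 0 := by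
      have := h (m : ℝ)
      simp only [sub_mul]
      rw [Finset.sum_sub_distrib, this, sub_self]
    rw [Finset.sum_eq_single m] at h0
    · have hf : fallFac (m : ℝ) m = m.factorial := fallFac_self m
      rw [hf] at h0
      have : (m.factorial : ℝ) ≠ 0 := Nat.cast_ne_zero.mpr (Nat.factorial_ne_zero m)
      have := mul_eq_zero.mp h0
      rcases this with h1 | h1
      · linarith [sub_eq_zero.mp h1]
      · exact absurd h1 this
    · intro k hk hkm
      rcases lt_or_gt_of_ne hkm with hlt | hgt
      · rw [ih k hlt (lt_trans hlt hm), sub_self, zero_mul]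
      · rw [fallFac_zero_of_lt m k hgt, mul_zero]
    · intro hmem
      exact absurd (Finset.mem_range.mpr hm) hmem
/-- `B_n^q(r+s) = ∑_{j=0}^n C(n,j) r^{n−j} B_j^q(s)`, where `B_n^q(a)` is
defined from the `a`-Whitney numbers of the second kind `W a`. -/
theorem bernoulli_q_add (q r s : ℝ) (hq : q ≠ 0)
    (W : ℝ → ℕ → ℕ → ℝ)
    (hW0 : ∀ (a : ℝ) (n k : ℕ), n < k → W a n k = 0)
    (hW : ∀ (a : ℝ) (n : ℕ), ∀ x : ℝ, (q * x + a) ^ n =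
      ∑ k ∈ Finset.range (n + 1), q ^ k * W a n k * fallFac x k)
    (B : ℝ → ℕ → ℝ)
    (hB : ∀ (a : ℝ) (n : ℕ), B a n = ∑ k ∈ Finset.range (n + 1),
      (-1 : ℝ) ^ k * ((k.factorial : ℝ) / ((k : ℝ) + 1)) * W a n k)
    (n : ℕ) :
    B (r + s) n = ∑ j ∈ Finset.range (n + 1),
      (n.choose j : ℝ) * r ^ (n - j) * B s j := by
  -- key: W (r+s) n k = ∑ j, C(n,j) r^(n-j) W s j k
  have key : ∀ k, k < n + 1 → W (r + s) n k
      = ∑ j ∈ Finset.range (n + 1), (n.choose j : ℝ) * r ^ (n - j) * W s j k := by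
    set c : ℕ → ℝ := fun k => q ^ k * W (r + s) n k with hc
    set d : ℕ → ℝ := fun k =>
      q ^ k * ∑ j ∈ Finset.range (n + 1), (n.choose j : ℝ) * r ^ (n - j) * W s j k with hd
    have heq : ∀ x : ℝ, ∑ k ∈ Finset.range (n + 1), c k * fallFac x k
        = ∑ k ∈ Finset.range (n + 1), d k * fallFac x k := by
      intro x
      have lhs : ∑ k ∈ Finset.range (n + 1), c k * fallFac x k = (q * x + (r + s)) ^ n := by
        rw [hW (r + s) n x]
      have step1 : (q * x + (r + s)) ^ n
          = ∑ j ∈ Finset.range (n + 1), (q * x + s) ^ j * r ^ (n - j) * (n.choose j : ℝ) := by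
        rw [show q * x + (r + s) = (q * x + s) + r by ring, add_pow]
      have step2 : ∀ j ∈ Finset.range (n + 1), (q * x + s) ^ j * r ^ (n - j) * (n.choose j : ℝ)
          = ∑ k ∈ Finset.range (n + 1),
            (n.choose j : ℝ) * r ^ (n - j) * (q ^ k * W s j k * fallFac x k) := by
        intro j hj
        rw [hW s j x]
        rw [Finset.sum_mul, Finset.sum_mul, ← Finset.sum_mul, ← Finset.sum_mul]
        rw [Finset.sum_subset (Finset.range_subset_range.mpr
          (Nat.add_le_add_right (Nat.lt_succ_iff.mp (Finset.mem_range.mp hj)) 1))]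
        · rw [Finset.sum_mul, Finset.sum_mul]
          apply Finset.sum_congr rfl
          intro k _
          ring
        · intro k _ hk
          rw [hW0 s j k (by simpa using Finset.mem_range.not.mp hk)]
          ring
      rw [lhs, step1, Finset.sum_congr rfl step2, Finset.sum_comm]
      apply Finset.sum_congr rfl
      intro k _
      simp only [hd]
      rw [Finset.mul_sum, Finset.sum_mul]
      apply Finset.sum_congr rfl
      intro j _
      ring
    intro k hk
    have := coeff_unique (n + 1) c d heq k hk
    simp only [hc, hd] at this
    exact mul_left_cancel₀ (pow_ne_zero k hq) this
  rw [hB]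
  have swap : ∑ k ∈ Finset.range (n + 1),
      (-1 : ℝ) ^ k * ((k.factorial : ℝ) / ((k : ℝ) + 1)) * W (r + s) n k
      = ∑ j ∈ Finset.range (n + 1), (n.choose j : ℝ) * r ^ (n - j) *
        ∑ k ∈ Finset.range (n + 1),
          (-1 : ℝ) ^ k * ((k.factorial : ℝ) / ((k : ℝ) + 1)) * W s j k := by
    rw [Finset.sum_congr rfl (fun k hk => by
      rw [key k (Finset.mem_range.mp hk), Finset.mul_sum])]
    rw [Finset.sum_comm]
    apply Finset.sum_congr rfl
    intro j _
    rw [Finset.mul_sum]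
    apply Finset.sum_congr rfl
    intro k _
    ring
  rw [swap]
  apply Finset.sum_congr rfl
  intro j hj
  congr 1
  rw [hB s j]
  rw [← Finset.sum_subset (Finset.range_subset_range.mpr
    (Nat.add_le_add_right (Nat.lt_succ_iff.mp (Finset.mem_range.mp hj)) 1))]
  intro k _ hk
  rw [hW0 s j k (by simpa using Finset.mem_range.not.mp hk)]
  ring
end

section
/- Let q ≠ 0 and r be real numbers and let k be a nonnegative integer. For every real t, the series ∑_{n=0}^∞ W(n,k) t^n/n! converges and equals (e^{rt}/k!) · ((e^{qt} − 1)/q)^k. -/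
/-!
Evaluating the defining identity at `x = m ∈ ℕ`, where `(m)_j = j! * C(m, j)`, gives the Newton
expansion `(qm + r)^n = ∑_j q^j j! W(n,j) C(m,j)`; hence `q^k k! W(n,k)` is the `k`-th forward
difference at `0` of `m ↦ (qm + r)^n`. Forward differences commute with the exponential series
in `n`, and the `k`-th forward difference at `0` of `m ↦ e^{(qm+r)t} = e^{rt} (e^{qt})^m` is
`e^{rt} (e^{qt} - 1)^k`.
-/

open Finset Nat fwdDiff

lemma fallFac_natCast_s10 (m j : ℕ) : fallFac m j = j ! * m.choose j := by
  rw [fallFac, ← descPochhammer_eval_eq_prod_range, descPochhammer_eval_eq_descFactorial,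
    Nat.descFactorial_eq_factorial_mul_choose, Nat.cast_mul]

lemma fwdDiff_iter_natCast_choose_zero (R : Type*) [Ring R] (j k : ℕ) :
    Δ_[1] ^[k] (fun m : ℕ ↦ (m.choose j : R)) 0 = if k = j then 1 else 0 := by
  have h := congrArg (Int.cast : ℤ → R) (fwdDiff_iter_choose_zero j k)
  rw [fwdDiff_iter_eq_sum_shift] at h ⊢
  push_cast at h
  simpa [zsmul_eq_mul] using h

lemma fwdDiff_iter_sum_mul_choose_zero {R : Type*} [Ring R] (s : Finset ℕ) (c : ℕ → R)
    (k : ℕ) :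
    Δ_[1] ^[k] (fun m : ℕ ↦ ∑ j ∈ s, c j * m.choose j) 0 = if k ∈ s then c k else 0 := by
  have h_sum : (fun m : ℕ ↦ ∑ j ∈ s, c j * m.choose j) =
      ∑ j ∈ s, c j • fun m : ℕ ↦ (m.choose j : R) := by
    ext m
    simp
  simp [h_sum, fwdDiff_iter_natCast_choose_zero]

lemma fwdDiff_iter_pow {R : Type*} [CommRing R] (c : R) (k : ℕ) :
    Δ_[1] ^[k] (fun m : ℕ ↦ c ^ m) = fun m ↦ (c - 1) ^ k * c ^ m := by
  induction k with
  | zero => simp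
  | succ k ih =>
    ext m
    rw [Function.iterate_succ_apply', ih, fwdDiff]
    ring

lemma HasSum.fwdDiff_iter {ι M G : Type*} [AddCommMonoid M] [AddCommGroup G]
    [TopologicalSpace G] [IsTopologicalAddGroup G] {F : ι → M → G} {g : M → G}
    (hF : ∀ y, HasSum (fun i ↦ F i y) (g y))
    (h : M) (k : ℕ) (y : M) : HasSum (fun i ↦ Δ_[h] ^[k] (F i) y) (Δ_[h] ^[k] g y) := by
  simp only [fwdDiff_iter_eq_sum_shift]
  exact hasSum_sum fun j _ ↦ (hF _).const_smul _

lemma hasSum_pow_div_factorial (x : ℝ) : HasSum (fun n ↦ x ^ n / n !) (Real.exp x) := by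
  rw [Real.exp_eq_exp_ℝ]
  exact NormedSpace.expSeries_div_hasSum_exp x

lemma whitney_mul_eq_fwdDiff_iter {q r : ℝ} {W : ℕ → ℕ → ℝ}
    (hW0 : ∀ n k, n < k → W n k = 0)
    (hW : ∀ n : ℕ, ∀ x : ℝ, (q * x + r) ^ n =
      ∑ k ∈ Finset.range (n + 1), q ^ k * W n k * fallFac x k) (n k : ℕ) :
    q ^ k * k ! * W n k = Δ_[1] ^[k] (fun m : ℕ ↦ (q * m + r) ^ n) 0 := by
  have h_newton : (fun m : ℕ ↦ (q * m + r) ^ n) =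
      fun m : ℕ ↦ ∑ j ∈ range (n + 1), q ^ j * j ! * W n j * m.choose j := by
    ext m
    simp only [hW, fallFac_natCast_s10]
    exact sum_congr rfl fun j _ ↦ by ring
  rw [h_newton, fwdDiff_iter_sum_mul_choose_zero]
  split_ifs with hk
  · rfl
  · rw [hW0 n k (by simpa using hk), mul_zero]

/-- the exponential generating function of the `r`-Whitney numbers of the
second kind: for each `k`, `∑_{n≥0} W(n,k) t^n/n! = (e^{rt}/k!)((e^{qt} − 1)/q)^k`. -/
theorem whitneySecond_generating_function (q r : ℝ) (hq : q ≠ 0)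
    (W : ℕ → ℕ → ℝ)
    (hW0 : ∀ n k, n < k → W n k = 0)
    (hW : ∀ n : ℕ, ∀ x : ℝ, (q * x + r) ^ n =
      ∑ k ∈ Finset.range (n + 1), q ^ k * W n k * fallFac x k)
    (k : ℕ) (t : ℝ) :
    HasSum (fun n : ℕ => W n k * t ^ n / (n.factorial : ℝ))
      (Real.exp (r * t) / (k.factorial : ℝ) * ((Real.exp (q * t) - 1) / q) ^ k) := by
  have h_exp : ∀ m : ℕ, HasSum (fun n ↦ ((t ^ n / n !) • fun m : ℕ ↦ (q * m + r) ^ n) m)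
      ((Real.exp (r * t) • fun m : ℕ ↦ Real.exp (q * t) ^ m) m) := by
    intro m
    convert hasSum_pow_div_factorial ((q * m + r) * t) using 1
    · ext n
      rw [Pi.smul_apply, smul_eq_mul, mul_pow]
      ring
    · simp only [Pi.smul_apply, smul_eq_mul, ← Real.exp_nat_mul, ← Real.exp_add]
      ring_nf
  have h_diff := HasSum.fwdDiff_iter h_exp 1 k 0
  simp only [fwdDiff_iter_const_smul, fwdDiff_iter_pow, Pi.smul_apply, smul_eq_mul,
    pow_zero, mul_one, ← whitney_mul_eq_fwdDiff_iter hW0 hW] at h_diff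
  have hqk : q ^ k * k ! ≠ 0 := by positivity
  have h_terms : (fun n : ℕ ↦ W n k * t ^ n / n !) =
      fun n ↦ t ^ n / n ! * (q ^ k * k ! * W n k) / (q ^ k * k !) := by
    ext n
    field_simp
  have h_value : Real.exp (r * t) / k ! * ((Real.exp (q * t) - 1) / q) ^ k =
      Real.exp (r * t) * (Real.exp (q * t) - 1) ^ k / (q ^ k * k !) := by
    rw [div_pow]
    field_simp
  rw [h_terms, h_value]
  exact h_diff.div_const _
end

section
/- Let q ≠ 0 and r be real numbers. For every nonnegative integer n, c_n^q(r) = ∑_{k=0}^n w(n,k)/(k+1). -/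
/-
Substituting `x = (t - r) / q` in the defining identity of `w` and using `(q y | q)_n = q^n (y)_n`
gives `(t - r | q)_n = ∑ₖ w(n,k) tᵏ`; integrating over `[0, 1]` yields the claim.
-/

theorem genFallFac_mul_left (q y : ℝ) (n : ℕ) :
    genFallFac q (q * y) n = q ^ n * fallFac y n := by
  rw [genFallFac, fallFac, Finset.pow_eq_prod_const, ← Finset.prod_mul_distrib]
  exact Finset.prod_congr rfl fun i _ => by ring

theorem integral_zero_one_sum_mul_pow (s : Finset ℕ) (a : ℕ → ℝ) :
    ∫ x in (0:ℝ)..1, ∑ k ∈ s, a k * x ^ k = ∑ k ∈ s, a k / ((k : ℝ) + 1) := by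
  rw [intervalIntegral.integral_finsetSum fun k _ =>
    (by fun_prop : Continuous fun x : ℝ ↦ a k * x ^ k).intervalIntegrable 0 1]
  refine Finset.sum_congr rfl fun k _ => ?_
  rw [intervalIntegral.integral_const_mul, integral_pow]
  simp [div_eq_mul_inv]

theorem cauchyFirst_eq_sum_whitneyFirst_general (q r : ℝ) (hq : q ≠ 0)
    (w : ℕ → ℕ → ℝ)
    (hw : ∀ n : ℕ, ∀ x : ℝ, q ^ n * fallFac x n =
      ∑ k ∈ Finset.range (n + 1), w n k * (q * x + r) ^ k)
    (n : ℕ) :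
    cauchyFirst q r n = ∑ k ∈ Finset.range (n + 1), w n k / ((k : ℝ) + 1) := by
  have hpoly (t : ℝ) : genFallFac q (t - r) n = ∑ k ∈ Finset.range (n + 1), w n k * t ^ k := by
    have h := hw n ((t - r) / q)
    rwa [mul_div_cancel₀ _ hq, sub_add_cancel, ← genFallFac_mul_left, mul_div_cancel₀ _ hq] at h
  simp only [cauchyFirst, hpoly]
  exact integral_zero_one_sum_mul_pow _ _

/-- `c_n^q(r) = ∑_{k=0}^n w(n,k)/(k+1)`. -/
theorem cauchyFirst_eq_sum_whitneyFirst (q r : ℝ) (hq : q ≠ 0)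
    (w : ℕ → ℕ → ℝ)
    (hw0 : ∀ n k, n < k → w n k = 0)
    (hw : ∀ n : ℕ, ∀ x : ℝ, q ^ n * fallFac x n =
      ∑ k ∈ Finset.range (n + 1), w n k * (q * x + r) ^ k)
    (n : ℕ) :
    cauchyFirst q r n = ∑ k ∈ Finset.range (n + 1), w n k / ((k : ℝ) + 1) :=
  cauchyFirst_eq_sum_whitneyFirst_general q r hq w hw n
end
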